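/- arXiv:2104.04096 — 4 statements merged into one kernel-verified Lean document; each statement's English description precedes it below -/
import Mathlib

section
/- Let H be a real inner product space, K a linear subspace of H, and Π : H → H a linear map whose range is contained in K and which satisfies Π p = p for every p ∈ K. Assume in addition that there is a constant C > 0 with ‖Π v‖ ≤ C‖v‖ for all v ∈ H, and that S : H × H → ℝ is a bilinear form for which there exist constants 0 < s_* ≤ s^* with s_*‖w‖² ≤ S(w,w) ≤ s^*‖w‖² for every w in the kernel of Π. Define ⟨u,v⟩_h := ⟨Π u, Π v⟩ + S(u − Π u, v − Π v). Then for every v ∈ H, (1/(2·max(1, 1/s_*)))‖v‖² ≤ ⟨v,v⟩_h ≤ (C² + s^*(1+C)²)‖v‖²; in particular the discrete bilinear form is equivalent to the squared norm with constants depending only on C, s_* and s^*. -/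
/-!
The reconstruction splits every `v` as `Π v + (v - Π v)`, and the second summand lies in the
kernel of `Π` because `Π` is a projection onto `K`; there the stabilization controls the norm.
The lower bound follows from `‖a + b‖² ≤ 2 (‖a‖² + ‖b‖²)`, the upper one from
`‖v - Π v‖ ≤ (1 + C) ‖v‖`.
-/

open scoped InnerProductSpace

theorem LinearMap.IsProj.sub_apply_mem_ker {R M : Type*} [Ring R] [AddCommGroup M] [Module R M]
    {m : Submodule R M} {f : M →ₗ[R] M} (h : LinearMap.IsProj m f) (x : M) :
    x - f x ∈ LinearMap.ker f := by
  rw [LinearMap.mem_ker, map_sub, h.map_id _ (h.map_mem x), sub_self]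

theorem norm_add_sq_le_two_mul {E : Type*} [SeminormedAddGroup E] (a b : E) :
    ‖a + b‖ ^ 2 ≤ 2 * (‖a‖ ^ 2 + ‖b‖ ^ 2) :=
  calc ‖a + b‖ ^ 2 ≤ (‖a‖ + ‖b‖) ^ 2 := by gcongr; exact norm_add_le a b
    _ ≤ 2 * (‖a‖ ^ 2 + ‖b‖ ^ 2) := add_sq_le

theorem norm_sub_le_one_add_mul {E : Type*} [SeminormedAddGroup E] {a b : E} {C : ℝ}
    (h : ‖b‖ ≤ C * ‖a‖) : ‖a - b‖ ≤ (1 + C) * ‖a‖ := by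
  linarith [norm_sub_le a b]

theorem norm_add_sq_le_of_le_mul_norm_sq {E : Type*} [SeminormedAddGroup E] {p w : E} {s t : ℝ}
    (hs : 0 < s) (ht : s * ‖w‖ ^ 2 ≤ t) :
    1 / (2 * max 1 (1 / s)) * ‖p + w‖ ^ 2 ≤ ‖p‖ ^ 2 + t := by
  set M := max 1 (1 / s)
  have hM : 0 < M := lt_max_of_lt_left one_pos
  have hw : ‖w‖ ^ 2 ≤ M * t := by
    have ht0 : 0 ≤ t := le_trans (by positivity) ht
    calc ‖w‖ ^ 2 ≤ 1 / s * t := by rw [one_div_mul_eq_div, le_div_iff₀ hs]; linarith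
      _ ≤ M * t := by gcongr; exact le_max_right _ _
  have hp : ‖p‖ ^ 2 ≤ M * ‖p‖ ^ 2 := le_mul_of_one_le_left (by positivity) (le_max_left _ _)
  rw [one_div_mul_eq_div, div_le_iff₀ (by positivity)]
  nlinarith [norm_add_sq_le_two_mul p w]

theorem vem_inner_product_stability_general
    {H : Type*} [NormedAddCommGroup H] [InnerProductSpace ℝ H]
    (K : Submodule ℝ H) (Pi : H →ₗ[ℝ] H)
    (hrange : LinearMap.range Pi ≤ K)
    (hproj : ∀ p ∈ K, Pi p = p)
    (C : ℝ)
    (hbound : ∀ v : H, ‖Pi v‖ ≤ C * ‖v‖)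
    (S : H →ₗ[ℝ] H →ₗ[ℝ] ℝ)
    (sStar sSup : ℝ) (hs0 : 0 < sStar) (hss : sStar ≤ sSup)
    (hS : ∀ w ∈ LinearMap.ker Pi,
      sStar * ‖w‖ ^ 2 ≤ S w w ∧ S w w ≤ sSup * ‖w‖ ^ 2) :
    ∀ v : H,
      (1 / (2 * max 1 (1 / sStar))) * ‖v‖ ^ 2
          ≤ ⟪Pi v, Pi v⟫_ℝ + S (v - Pi v) (v - Pi v) ∧
      ⟪Pi v, Pi v⟫_ℝ + S (v - Pi v) (v - Pi v)
          ≤ (C ^ 2 + sSup * (1 + C) ^ 2) * ‖v‖ ^ 2 := by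
  intro v
  have hPi : LinearMap.IsProj K Pi := ⟨fun x => hrange (LinearMap.mem_range_self Pi x), hproj⟩
  obtain ⟨hS_lower, hS_upper⟩ := hS _ (hPi.sub_apply_mem_ker v)
  rw [real_inner_self_eq_norm_sq]
  constructor
  · simpa using norm_add_sq_le_of_le_mul_norm_sq (p := Pi v) hs0 hS_lower
  · have hsSup : 0 ≤ sSup := hs0.le.trans hss
    calc ‖Pi v‖ ^ 2 + S (v - Pi v) (v - Pi v)
        ≤ (C * ‖v‖) ^ 2 + sSup * ((1 + C) * ‖v‖) ^ 2 := by
          gcongr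
          · exact hbound v
          · exact hS_upper.trans (by gcongr; exact norm_sub_le_one_add_mul (hbound v))
      _ = (C ^ 2 + sSup * (1 + C) ^ 2) * ‖v‖ ^ 2 := by ring

/-- Stability of the projection-based virtual element inner product:
if the reconstruction operator `Π` has range in `K`, fixes `K`, and is bounded
by `C`, and the stabilization `S` is spectrally equivalent to the squared norm
on the kernel of `Π` with constants `0 < s_* ≤ s^*`, then the discrete bilinear
form `⟨v,v⟩_h = ‖Πv‖² + S(v - Πv, v - Πv)` is equivalent to `‖v‖²`. -/
theorem vem_inner_product_stability
    {H : Type*} [NormedAddCommGroup H] [InnerProductSpace ℝ H]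
    (K : Submodule ℝ H) (Pi : H →ₗ[ℝ] H)
    (hrange : LinearMap.range Pi ≤ K)
    (hproj : ∀ p ∈ K, Pi p = p)
    (C : ℝ) (hC : 0 < C)
    (hbound : ∀ v : H, ‖Pi v‖ ≤ C * ‖v‖)
    (S : H →ₗ[ℝ] H →ₗ[ℝ] ℝ)
    (sStar sSup : ℝ) (hs0 : 0 < sStar) (hss : sStar ≤ sSup)
    (hS : ∀ w ∈ LinearMap.ker Pi,
      sStar * ‖w‖ ^ 2 ≤ S w w ∧ S w w ≤ sSup * ‖w‖ ^ 2) :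
    ∀ v : H,
      (1 / (2 * max 1 (1 / sStar))) * ‖v‖ ^ 2
          ≤ ⟪Pi v, Pi v⟫_ℝ + S (v - Pi v) (v - Pi v) ∧
      ⟪Pi v, Pi v⟫_ℝ + S (v - Pi v) (v - Pi v)
          ≤ (C ^ 2 + sSup * (1 + C) ^ 2) * ‖v‖ ^ 2 :=
  vem_inner_product_stability_general K Pi hrange hproj C hbound S sStar sSup hs0 hss hS
end

section
/- Let U and P be real Hilbert spaces, and let a : U × U → ℝ and b : U × P → ℝ be bounded bilinear forms. Set U₀ = {u ∈ U : b(u,q) = 0 for all q ∈ P}. Assume there exist constants α > 0 and β > 0 such that (i) for every u ∈ U₀, sup over nonzero v ∈ U₀ of a(u,v)/‖v‖ is at least α‖u‖; (ii) for every v ∈ U₀, sup over nonzero u ∈ U₀ of a(u,v)/‖u‖ is at least α‖v‖; and (iii) for every p ∈ P, sup over nonzero u ∈ U of b(u,p)/‖u‖ is at least β‖p‖. Then for every pair of bounded linear functionals f on U and g on P there exist unique u ∈ U and p ∈ P such that a(u,v) − b(v,p) = f(v) for all v ∈ U and b(u,q) = g(q) for all q ∈ P; moreover there is a constant C > 0,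 depending only on α, β and the continuity bounds of a and b, such that ‖u‖ + ‖p‖ ≤ C(‖f‖_{U'} + ‖g‖_{P'}). -/
/-!
Write `K = ker b`. The inf-sup condition for `b` makes the Riesz operator `P → U` of `b`
bounded below, so by the closed range theorem `u ↦ b u` maps `U` onto `P'`, and every functional
on `U` vanishing on `K` is of the form `b(·, p)`. Given `(f, g)`, lift `g` to some `w` with
`b w = g`, solve the problem for `a` on `K × K` (onto by condition (ii), in the same way), and
recover `p` from the residual `a(u, ·) - f`, which vanishes on `K`. For the estimate split
`u = u₀ + w` with `u₀ ∈ K`, `w ∈ Kᗮ`: the inf-sup condition for `b` bounds `w` by `g`,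
condition (i) bounds `u₀` by `f` and `w`, and the inf-sup condition for `b` once more bounds `p`
by `f` and `u`. Uniqueness follows by linearity.
-/

open Set ContinuousLinearMap InnerProductSpace
open scoped RealInnerProductSpace InnerProduct

namespace ContinuousLinearMap

variable {𝕜 E F : Type*} [RCLike 𝕜]
  [NormedAddCommGroup E] [InnerProductSpace 𝕜 E] [CompleteSpace E]
  [NormedAddCommGroup F] [InnerProductSpace 𝕜 F] [CompleteSpace F]

theorem range_eq_orthogonal_ker_adjoint_of_bound (T : E →L[𝕜] F) {c : ℝ} (hc : 0 < c)
    (hT : ∀ x, c * ‖x‖ ≤ ‖T x‖) : T.range = (T†.ker)ᗮ := by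
  have hclosed : IsClosed (T.range : Set F) := by
    refine (T.antilipschitz_of_bound (K := ⟨c⁻¹, by positivity⟩) fun x => ?_).isClosed_range
      T.uniformContinuous
    exact (le_inv_mul_iff₀ hc).2 (hT x)
  rw [orthogonal_ker, adjoint_adjoint, hclosed.submodule_topologicalClosure_eq]

theorem surjective_of_adjoint_bound (T : E →L[𝕜] F) {c : ℝ} (hc : 0 < c)
    (hT : ∀ y, c * ‖y‖ ≤ ‖(T†) y‖) : Function.Surjective T := by
  -- `T ∘L T†` is self-adjoint and bounded below, hence onto.
  have hTT : ∀ y, c ^ 2 * ‖y‖ ≤ ‖(T ∘L T†) y‖ := by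
    intro y
    have key : (c * ‖y‖) ^ 2 ≤ ‖(T ∘L T†) y‖ * ‖y‖ :=
      calc (c * ‖y‖) ^ 2 ≤ ‖(T†) y‖ ^ 2 := by gcongr; exact hT y
        _ = RCLike.re ⟪(T ∘L T†) y, y⟫_𝕜 := by
          rw [comp_apply, ← adjoint_inner_right, inner_self_eq_norm_sq]
        _ ≤ ‖(T ∘L T†) y‖ * ‖y‖ := (RCLike.re_le_norm _).trans (norm_inner_le_norm _ _)
    rcases (norm_nonneg y).eq_or_lt with hy | hy
    · simp [← hy]
    · nlinarith
  have hker : (T ∘L T†).ker = ⊥ := by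
    refine LinearMap.ker_eq_bot'.2 fun y hy => norm_le_zero_iff.1 ?_
    have := hTT y
    rw [← coe_coe, hy, norm_zero] at this
    exact nonpos_of_mul_nonpos_right this (by positivity)
  have hrange := (T ∘L T†).range_eq_orthogonal_ker_adjoint_of_bound (by positivity) hTT
  rw [adjoint_comp, adjoint_adjoint, hker, Submodule.bot_orthogonal_eq_top] at hrange
  intro y
  obtain ⟨x, hx⟩ := LinearMap.range_eq_top.1 hrange y
  exact ⟨(T†) x, hx⟩

end ContinuousLinearMap

theorem le_of_le_iSup_div_norm {G : Type*} [SeminormedAddCommGroup G] {ι : Sort*} [Nonempty ι]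
    {x : ι → G} {s : ι → ℝ} {c M : ℝ} (h : c ≤ ⨆ i, s i / ‖x i‖) (hM : 0 ≤ M)
    (hs : ∀ i, s i ≤ M * ‖x i‖) : c ≤ M := by
  refine h.trans (ciSup_le fun i => ?_)
  rcases (norm_nonneg (x i)).eq_or_lt with hx | hx
  · simp [← hx, hM]
  · exact (div_le_iff₀ hx).2 (hs i)

/-- `c * ‖x‖ ≤ sup_{y ∈ T} B x y / ‖y‖` for all `x ∈ S`, phrased through upper bounds `M` of the
quotients so that no junk value of `⨆` enters. -/
def InfSupCondition {E F : Type*} [SeminormedAddCommGroup E] [NormedSpace ℝ E]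
    [SeminormedAddCommGroup F] [NormedSpace ℝ F] (B : E →L[ℝ] F →L[ℝ] ℝ) (S : Set E) (T : Set F)
    (c : ℝ) : Prop :=
  ∀ x ∈ S, ∀ M, 0 ≤ M → (∀ y ∈ T, B x y ≤ M * ‖y‖) → c * ‖x‖ ≤ M

section RieszOfBilin

variable {E F : Type*} [NormedAddCommGroup E] [InnerProductSpace ℝ E]
  [NormedAddCommGroup F] [InnerProductSpace ℝ F] [CompleteSpace F]

noncomputable def rieszOfBilin (B : E →L[ℝ] F →L[ℝ] ℝ) : E →L[ℝ] F :=
  (toDual ℝ F).symm.toContinuousLinearEquiv.toContinuousLinearMap ∘L B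

@[simp]
theorem inner_rieszOfBilin_apply (B : E →L[ℝ] F →L[ℝ] ℝ) (x : E) (y : F) :
    ⟪rieszOfBilin B x, y⟫ = B x y :=
  toDual_symm_apply

theorem ker_rieszOfBilin (B : E →L[ℝ] F →L[ℝ] ℝ) : (rieszOfBilin B).ker = B.ker :=
  LinearEquiv.ker_comp _ _

theorem InfSupCondition.mul_norm_le_norm_rieszOfBilin {B : E →L[ℝ] F →L[ℝ] ℝ} {c : ℝ}
    (h : InfSupCondition B univ univ c) (x : E) :
    c * ‖x‖ ≤ ‖rieszOfBilin B x‖ :=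
  h x trivial _ (norm_nonneg _) fun y _ => by
    simpa using real_inner_le_norm (rieszOfBilin B x) y

variable [CompleteSpace E]

theorem adjoint_rieszOfBilin_flip (B : E →L[ℝ] F →L[ℝ] ℝ) :
    (rieszOfBilin B.flip)† = rieszOfBilin B := by
  refine ((eq_adjoint_iff _ _).2 fun x y => ?_).symm
  rw [inner_rieszOfBilin_apply, real_inner_comm, inner_rieszOfBilin_apply, flip_apply]

namespace InfSupCondition

variable {B : E →L[ℝ] F →L[ℝ] ℝ} {c : ℝ}

theorem exists_apply_eq (h : InfSupCondition B.flip univ univ c) (hc : 0 < c)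
    (φ : F →L[ℝ] ℝ) : ∃ x, B x = φ := by
  have hsurj := (rieszOfBilin B).surjective_of_adjoint_bound hc fun y => by
    rw [← adjoint_rieszOfBilin_flip, adjoint_adjoint]
    exact h.mul_norm_le_norm_rieszOfBilin y
  obtain ⟨x, hx⟩ := hsurj ((toDual ℝ F).symm φ)
  refine ⟨x, ext fun y => ?_⟩
  rw [← inner_rieszOfBilin_apply, hx, toDual_symm_apply]

theorem exists_forall_apply_eq (h : InfSupCondition B.flip univ univ c) (hc : 0 < c)
    (φ : E →L[ℝ] ℝ) (hφ : ∀ x ∈ B.ker, φ x = 0) : ∃ y, ∀ x, B x y = φ x := by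
  have hrange := (rieszOfBilin B.flip).range_eq_orthogonal_ker_adjoint_of_bound hc
    h.mul_norm_le_norm_rieszOfBilin
  rw [adjoint_rieszOfBilin_flip, ker_rieszOfBilin] at hrange
  have hmem : (toDual ℝ E).symm φ ∈ (B.ker)ᗮ := fun x hx => by
    rw [real_inner_comm, toDual_symm_apply, hφ x hx]
  rw [← hrange] at hmem
  obtain ⟨y, hy⟩ := hmem
  refine ⟨y, fun x => ?_⟩
  rw [← flip_apply B, ← inner_rieszOfBilin_apply, ← coe_coe, hy, toDual_symm_apply]

theorem mul_norm_le_norm_apply (h : InfSupCondition B.flip univ univ c) (hc : 0 < c)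
    {w : E} (hw : w ∈ (B.ker)ᗮ) : c * ‖w‖ ≤ ‖B w‖ := by
  -- Represent `⟪w, ·⟫` as `B · y`; then `c ‖y‖ ≤ ‖w‖` and `‖w‖ ^ 2 = B w y ≤ ‖B w‖ ‖y‖`.
  obtain ⟨y, hy⟩ := h.exists_forall_apply_eq hc (toDual ℝ E w) fun x hx => by
    rw [toDual_apply_apply, real_inner_comm]; exact hw x hx
  have hy_le : c * ‖y‖ ≤ ‖w‖ := h y trivial _ (norm_nonneg _) fun x _ => by
    show B x y ≤ ‖w‖ * ‖x‖
    rw [hy, toDual_apply_apply]; exact real_inner_le_norm w x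
  have hw_sq : ‖w‖ ^ 2 ≤ ‖B w‖ * ‖y‖ := by
    rw [← real_inner_self_eq_norm_sq, ← toDual_apply_apply (𝕜 := ℝ), ← hy]
    exact (Real.le_norm_self _).trans ((B w).le_opNorm y)
  rcases (norm_nonneg w).eq_or_lt with hw0 | hw0
  · simp [← hw0]
  · nlinarith [norm_nonneg (B w)]

end InfSupCondition

end RieszOfBilin

section Brezzi

variable {U P : Type*} [NormedAddCommGroup U] [InnerProductSpace ℝ U]
  [NormedAddCommGroup P] [InnerProductSpace ℝ P]
  {a : U →L[ℝ] U →L[ℝ] ℝ} {b : U →L[ℝ] P →L[ℝ] ℝ} {α β : ℝ}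
  {f : U →L[ℝ] ℝ} {g : P →L[ℝ] ℝ} {u : U} {p : P}

theorem mul_norm_multiplier_le_of_saddlePoint (hb : InfSupCondition b.flip univ univ β)
    (hf : ∀ v, a u v - b v p = f v) : β * ‖p‖ ≤ ‖a‖ * ‖u‖ + ‖f‖ :=
  hb p trivial _ (by positivity) fun v _ => by
    have hf_le := neg_le_of_abs_le (f.le_opNorm v)
    have ha_le := le_of_abs_le (a.le_opNorm₂ u v)
    rw [flip_apply]
    linarith [hf v]

variable [CompleteSpace U] [CompleteSpace P]

theorem norm_le_of_saddlePoint (hα : 0 < α) (hβ : 0 < β) (ha : InfSupCondition a b.ker b.ker α)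
    (hb : InfSupCondition b.flip univ univ β) (hf : ∀ v, a u v - b v p = f v)
    (hg : ∀ q, b u q = g q) :
    ‖u‖ ≤ (α⁻¹ + (α⁻¹ * ‖a‖ + 1) * β⁻¹) * (‖f‖ + ‖g‖) := by
  obtain ⟨u₀, hu₀, w, hw, rfl⟩ := b.ker.exists_add_mem_mem_orthogonal u
  have hbu₀ : b u₀ = 0 := hu₀
  have hbw : b w = g := ext fun q => by simpa [hbu₀] using hg q
  have hw_le : β * ‖w‖ ≤ ‖g‖ := hbw ▸ hb.mul_norm_le_norm_apply hβ hw
  have hu₀_le : α * ‖u₀‖ ≤ ‖f‖ + ‖a‖ * ‖w‖ := ha u₀ hu₀ _ (by positivity) fun v hv => by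
    have hbv : b v p = 0 := by rw [show b v = 0 from hv, zero_apply]
    have hfv := hf v
    rw [hbv, map_add, add_apply] at hfv
    have hf_le := (Real.le_norm_self _).trans (f.le_opNorm v)
    have ha_le := neg_le_of_abs_le (a.le_opNorm₂ w v)
    linarith
  have hC : 0 ≤ α⁻¹ * ‖a‖ + 1 := by positivity
  calc ‖u₀ + w‖ ≤ ‖u₀‖ + ‖w‖ := norm_add_le _ _
    _ ≤ α⁻¹ * (‖f‖ + ‖a‖ * ‖w‖) + ‖w‖ := by gcongr; exact (le_inv_mul_iff₀ hα).2 hu₀_le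
    _ = α⁻¹ * ‖f‖ + (α⁻¹ * ‖a‖ + 1) * ‖w‖ := by ring
    _ ≤ α⁻¹ * ‖f‖ + (α⁻¹ * ‖a‖ + 1) * (β⁻¹ * ‖g‖) := by
      gcongr; exact (le_inv_mul_iff₀ hβ).2 hw_le
    _ ≤ (α⁻¹ + (α⁻¹ * ‖a‖ + 1) * β⁻¹) * (‖f‖ + ‖g‖) := by
      have := mul_nonneg (inv_nonneg.2 hα.le) (norm_nonneg g)
      have := mul_nonneg (mul_nonneg hC (inv_nonneg.2 hβ.le)) (norm_nonneg f)
      linarith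

theorem norm_add_norm_le_of_saddlePoint (hα : 0 < α) (hβ : 0 < β)
    (ha : InfSupCondition a b.ker b.ker α) (hb : InfSupCondition b.flip univ univ β)
    (hf : ∀ v, a u v - b v p = f v) (hg : ∀ q, b u q = g q) :
    ‖u‖ + ‖p‖ ≤
      ((1 + β⁻¹ * ‖a‖) * (α⁻¹ + (α⁻¹ * ‖a‖ + 1) * β⁻¹) + β⁻¹) * (‖f‖ + ‖g‖) := by
  have hu := norm_le_of_saddlePoint hα hβ ha hb hf hg
  have hp : ‖p‖ ≤ β⁻¹ * (‖a‖ * ‖u‖ + ‖f‖) :=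
    (le_inv_mul_iff₀ hβ).2 (mul_norm_multiplier_le_of_saddlePoint hb hf)
  have hβ' : 0 ≤ β⁻¹ := inv_nonneg.2 hβ.le
  calc ‖u‖ + ‖p‖ ≤ (1 + β⁻¹ * ‖a‖) * ‖u‖ + β⁻¹ * ‖f‖ := by linarith
    _ ≤ (1 + β⁻¹ * ‖a‖) * ((α⁻¹ + (α⁻¹ * ‖a‖ + 1) * β⁻¹) * (‖f‖ + ‖g‖)) + β⁻¹ * (‖f‖ + ‖g‖) := by
      gcongr
      exact le_add_of_nonneg_right (norm_nonneg g)
    _ = _ := by ring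

theorem saddlePoint_unique (hα : 0 < α) (hβ : 0 < β) (ha : InfSupCondition a b.ker b.ker α)
    (hb : InfSupCondition b.flip univ univ β) {u' : U} {p' : P}
    (hf : ∀ v, a u v - b v p = f v) (hg : ∀ q, b u q = g q)
    (hf' : ∀ v, a u' v - b v p' = f v) (hg' : ∀ q, b u' q = g q) : u = u' ∧ p = p' := by
  have h := norm_add_norm_le_of_saddlePoint (u := u - u') (p := p - p') (f := 0) (g := 0)
    hα hβ ha hb
    (fun v => by simp only [map_sub, sub_apply, zero_apply]; linarith [hf v, hf' v])
    (fun q => by simp only [map_sub, sub_apply, zero_apply]; linarith [hg q, hg' q])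
  simp only [norm_zero, add_zero, mul_zero] at h
  have hu := norm_nonneg (u - u')
  have hp := norm_nonneg (p - p')
  exact ⟨sub_eq_zero.1 (norm_le_zero_iff.1 (by linarith)),
    sub_eq_zero.1 (norm_le_zero_iff.1 (by linarith))⟩

theorem exists_saddlePoint (hα : 0 < α) (hβ : 0 < β) (ha : InfSupCondition a.flip b.ker b.ker α)
    (hb : InfSupCondition b.flip univ univ β) (f : U →L[ℝ] ℝ) (g : P →L[ℝ] ℝ) :
    ∃ u p, (∀ v, a u v - b v p = f v) ∧ ∀ q, b u q = g q := by
  obtain ⟨w, hw⟩ := hb.exists_apply_eq hβ g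
  have haK : InfSupCondition (a.bilinearComp b.ker.subtypeL b.ker.subtypeL).flip univ univ α :=
    fun y _ M hM h => ha y y.2 M hM fun x hx => h ⟨x, hx⟩ trivial
  obtain ⟨x, hx⟩ := haK.exists_apply_eq hα ((f - a w) ∘L b.ker.subtypeL)
  obtain ⟨p, hp⟩ := hb.exists_forall_apply_eq hβ (a (x + w) - f) fun v hv => by
    have := DFunLike.congr_fun hx ⟨v, hv⟩
    simp only [bilinearComp_apply, Submodule.coe_subtypeL, Submodule.subtype_apply, sub_comp,
      sub_apply, comp_apply] at this
    simp only [sub_apply, map_add, add_apply]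
    linarith
  refine ⟨x + w, p, fun v => ?_, fun q => ?_⟩
  · rw [hp]; simp
  · have hbx : b x = 0 := x.2
    simp [hbx, hw]

end Brezzi

/-- Brezzi's theorem on the well-posedness of saddle-point problems. Let `U`, `P`
be real Hilbert spaces, `a`, `b` bounded bilinear forms, `U₀` the kernel of `b`
in the first slot. If `a` satisfies both inf-sup conditions on `U₀` with constant
`α > 0` and `b` satisfies the inf-sup condition with constant `β > 0`, then for
all bounded linear functionals `f`, `g` the saddle-point problem has a unique
solution `(u, p)`, which depends continuously on the data with a constant
depending only on `α`, `β` and the continuity bounds of `a` and `b`. -/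
theorem brezzi_saddle_point_well_posedness
    {U P : Type*}
    [NormedAddCommGroup U] [InnerProductSpace ℝ U] [CompleteSpace U]
    [NormedAddCommGroup P] [InnerProductSpace ℝ P] [CompleteSpace P]
    (a : U →ₗ[ℝ] U →ₗ[ℝ] ℝ) (b : U →ₗ[ℝ] P →ₗ[ℝ] ℝ)
    (Ca Cb : ℝ)
    (ha_bdd : ∀ u v : U, |a u v| ≤ Ca * ‖u‖ * ‖v‖)
    (hb_bdd : ∀ (u : U) (q : P), |b u q| ≤ Cb * ‖u‖ * ‖q‖)
    (U₀ : Set U) (hU₀ : U₀ = {u : U | ∀ q : P, b u q = 0})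
    (α β : ℝ) (hα : 0 < α) (hβ : 0 < β)
    (hinfsup1 : ∀ u ∈ U₀, α * ‖u‖ ≤ ⨆ v : U₀, a u (v : U) / ‖(v : U)‖)
    (hinfsup2 : ∀ v ∈ U₀, α * ‖v‖ ≤ ⨆ u : U₀, a (u : U) v / ‖(u : U)‖)
    (hinfsupb : ∀ p : P, β * ‖p‖ ≤ ⨆ u : U, b u p / ‖u‖) :
    (∀ (f : U →L[ℝ] ℝ) (g : P →L[ℝ] ℝ),
      ∃! up : U × P,
        (∀ v : U, a up.1 v - b v up.2 = f v) ∧ (∀ q : P, b up.1 q = g q)) ∧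
    ∃ C : ℝ, 0 < C ∧
      ∀ (f : U →L[ℝ] ℝ) (g : P →L[ℝ] ℝ) (u : U) (p : P),
        (∀ v : U, a u v - b v p = f v) → (∀ q : P, b u q = g q) →
        ‖u‖ + ‖p‖ ≤ C * (‖f‖ + ‖g‖) := by
  set a' := a.mkContinuous₂ Ca fun u v => (Real.norm_eq_abs _).trans_le (ha_bdd u v)
  set b' := b.mkContinuous₂ Cb fun u q => (Real.norm_eq_abs _).trans_le (hb_bdd u q)
  obtain rfl : U₀ = b'.ker :=
    hU₀.trans <| Set.ext fun u => by simp [b', ContinuousLinearMap.ext_iff]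
  have ha : InfSupCondition a' b'.ker b'.ker α := fun u hu M hM h =>
    le_of_le_iSup_div_norm (hinfsup1 u hu) hM fun v => h v v.2
  have ha_flip : InfSupCondition a'.flip b'.ker b'.ker α := fun v hv M hM h =>
    le_of_le_iSup_div_norm (hinfsup2 v hv) hM fun u => h u u.2
  have hb : InfSupCondition b'.flip univ univ β := fun p _ M hM h =>
    le_of_le_iSup_div_norm (hinfsupb p) hM fun u => h u trivial
  refine ⟨fun f g => ?_, _, by positivity, fun f g u p =>
    norm_add_norm_le_of_saddlePoint (a := a') (b := b') hα hβ ha hb⟩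
  obtain ⟨u, p, hu⟩ := exists_saddlePoint hα hβ ha_flip hb f g
  refine ⟨(u, p), hu, fun ⟨u', p'⟩ hup' => ?_⟩
  obtain ⟨rfl, rfl⟩ := saddlePoint_unique hα hβ ha hb hup'.1 hup'.2 hu.1 hu.2
  rfl
end

section
/- Let V, W and Z be real vector spaces, and let rot : V → W and div : W → Z be linear maps satisfying div ∘ rot = 0. Let V_h ⊆ V and W_h ⊆ W be subspaces with rot(V_h) ⊆ W_h, and let I_V : V → V and I_W : W → W be linear maps such that: the range of I_V is contained in V_h; I_W w = w for every w ∈ W_h; and I_W (rot v) = rot (I_V v) for every v ∈ V (the commuting property). Assume moreover the exactness of the continuous chain: every w ∈ W with div w = 0 is of the form rot v for some v ∈ V. Then the discrete chain is exact: {w ∈ W_h : div w = 0} = rot(V_h), i.e. rot(V_h) equals the kernel of div restricted to W_h. -/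
theorem Set.inter_range_subset_image_of_commute {α β : Type*} {f : α → β} {s : Set α}
    {t : Set β} {πα : α → α} {πβ : β → β} (hπα : ∀ a, πα a ∈ s)
    (hπβ : ∀ b ∈ t, πβ b = b)
    (hcomm : ∀ a, πβ (f a) = f (πα a)) :
    t ∩ Set.range f ⊆ f '' s := by
  rintro _ ⟨hb, a, rfl⟩
  exact ⟨πα a, hπα a, by rw [← hcomm, hπβ _ hb]⟩

/-- Abstract exactness of the discrete de Rham chain. If `div ∘ rot = 0`,
`rot` maps `V_h` into `W_h`, interpolation operators `I_V`, `I_W` satisfy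
`range I_V ⊆ V_h`, `I_W` fixes `W_h`, and `I_W ∘ rot = rot ∘ I_V` (the commuting
property), and the continuous chain is exact (every divergence-free `w` is a
curl), then the discrete chain is exact:
`{w ∈ W_h : div w = 0} = rot(V_h)`. -/
theorem discrete_deRham_exactness
    {V W Z : Type*}
    [AddCommGroup V] [Module ℝ V]
    [AddCommGroup W] [Module ℝ W]
    [AddCommGroup Z] [Module ℝ Z]
    (rot : V →ₗ[ℝ] W) (div : W →ₗ[ℝ] Z)
    (hdivrot : ∀ v : V, div (rot v) = 0)
    (Vh : Submodule ℝ V) (Wh : Submodule ℝ W)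
    (hrotVh : Submodule.map rot Vh ≤ Wh)
    (IV : V →ₗ[ℝ] V) (IW : W →ₗ[ℝ] W)
    (hIVrange : LinearMap.range IV ≤ Vh)
    (hIWfix : ∀ w ∈ Wh, IW w = w)
    (hcomm : ∀ v : V, IW (rot v) = rot (IV v))
    (hexact : ∀ w : W, div w = 0 → ∃ v : V, rot v = w) :
    {w : W | w ∈ Wh ∧ div w = 0} = (rot '' (Vh : Set V)) := by
  refine Set.Subset.antisymm ?_ ?_
  · rintro w ⟨hwWh, hwdiv⟩
    have hIV : ∀ v, IV v ∈ Vh := fun v ↦ hIVrange (LinearMap.mem_range_self IV v)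
    exact Set.inter_range_subset_image_of_commute hIV hIWfix hcomm ⟨hwWh, hexact w hwdiv⟩
  · rintro _ ⟨v, hv, rfl⟩
    exact ⟨hrotVh (Submodule.mem_map_of_mem hv), hdivrot v⟩
end

section
/- Let V be a real vector space and g : V × V → ℝ a symmetric positive semidefinite bilinear form (a semi-inner product). Let K be a subspace of V and Π : V → V a linear map whose range is contained in K, with Π p = p for every p ∈ K, and satisfying g(Π v, Π v) ≤ C² g(v,v) for every v ∈ V, for some constant C > 0. Let T : V × V → ℝ be a bilinear form for which there exist constants 0 < t_* ≤ t^* with t_* g(w,w) ≤ T(w,w) ≤ t^* g(w,w) for every w in the kernel of Π. Then there exist constants c_*, c^* > 0, depending only on C, t_* and t^*, such that for every v ∈ V, c_* g(v,v) ≤ g(Π v, Π v) + T(v − Π v, v − Π v) ≤ c^* g(v,v). -/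
/-!
Write `v = Π v + w` with `w = v - Π v`; since `Π` fixes its range, `w ∈ ker Π`. The parallelogram
law, which holds for every bilinear form, together with positive semidefiniteness gives
`g(a ± b, a ± b) ≤ 2 g(a,a) + 2 g(b,b)`. With `a = Π v, b = w` this bounds `g(v,v)` by the
discrete form (using `t_* g(w,w) ≤ T(w,w)`); with `a = v, b = Π v` it bounds `g(w,w)`, hence
`T(w,w)`, by `g(v,v)` (using the bound on `Π`).
-/

namespace LinearMap.BilinForm

variable {R M : Type*} [CommRing R] [AddCommGroup M] [Module R M] (g : LinearMap.BilinForm R M)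

theorem apply_add_add_apply_sub (a b : M) :
    g (a + b) (a + b) + g (a - b) (a - b) = 2 * g a a + 2 * g b b := by
  simp only [map_add, map_sub, LinearMap.add_apply, LinearMap.sub_apply]
  ring

variable [PartialOrder R] [IsOrderedRing R]

theorem apply_add_le (hg : ∀ x, 0 ≤ g x x) (a b : M) :
    g (a + b) (a + b) ≤ 2 * g a a + 2 * g b b := by
  rw [← g.apply_add_add_apply_sub]
  exact le_add_of_nonneg_right (hg _)

theorem apply_sub_le (hg : ∀ x, 0 ≤ g x x) (a b : M) :
    g (a - b) (a - b) ≤ 2 * g a a + 2 * g b b := by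
  rw [← g.apply_add_add_apply_sub]
  exact le_add_of_nonneg_left (hg _)

end LinearMap.BilinForm

theorem LinearMap.sub_apply_mem_ker_of_range_le {R M : Type*} [Ring R] [AddCommGroup M]
    [Module R M] {K : Submodule R M} {f : M →ₗ[R] M} (hrange : LinearMap.range f ≤ K)
    (hfix : ∀ p ∈ K, f p = p) (v : M) : v - f v ∈ LinearMap.ker f := by
  rw [LinearMap.mem_ker, map_sub, hfix _ (hrange (LinearMap.mem_range_self f v)), sub_self]

theorem vem_semi_inner_product_stability_general
    {V : Type*} [AddCommGroup V] [Module ℝ V]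
    (g : V →ₗ[ℝ] V →ₗ[ℝ] ℝ)
    (hg_pos : ∀ x : V, 0 ≤ g x x)
    (K : Submodule ℝ V) (Pi : V →ₗ[ℝ] V)
    (hrange : LinearMap.range Pi ≤ K)
    (hproj : ∀ p ∈ K, Pi p = p)
    (C : ℝ)
    (hbound : ∀ v : V, g (Pi v) (Pi v) ≤ C ^ 2 * g v v)
    (T : V →ₗ[ℝ] V →ₗ[ℝ] ℝ)
    (tStar tSup : ℝ) (ht0 : 0 < tStar) (htt : tStar ≤ tSup)
    (hT : ∀ w ∈ LinearMap.ker Pi,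
      tStar * g w w ≤ T w w ∧ T w w ≤ tSup * g w w) :
    ∃ cStar cSup : ℝ, 0 < cStar ∧ 0 < cSup ∧
      ∀ v : V,
        cStar * g v v ≤ g (Pi v) (Pi v) + T (v - Pi v) (v - Pi v) ∧
        g (Pi v) (Pi v) + T (v - Pi v) (v - Pi v) ≤ cSup * g v v := by
  have htSup : 0 < tSup := ht0.trans_le htt
  refine ⟨min 1 tStar / 2, C ^ 2 + 2 * tSup * (1 + C ^ 2), by positivity, by positivity,
    fun v => ?_⟩
  obtain ⟨hT_lower, hT_upper⟩ := hT _ (LinearMap.sub_apply_mem_ker_of_range_le hrange hproj v)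
  have hv := LinearMap.BilinForm.apply_add_le g hg_pos (Pi v) (v - Pi v)
  rw [add_sub_cancel] at hv
  have hw := LinearMap.BilinForm.apply_sub_le g hg_pos v (Pi v)
  have := hg_pos (Pi v)
  have := hg_pos (v - Pi v)
  constructor
  · calc min 1 tStar / 2 * g v v
        ≤ min 1 tStar / 2 * (2 * g (Pi v) (Pi v) + 2 * g (v - Pi v) (v - Pi v)) := by gcongr
      _ = min 1 tStar * g (Pi v) (Pi v) + min 1 tStar * g (v - Pi v) (v - Pi v) := by ring
      _ ≤ 1 * g (Pi v) (Pi v) + tStar * g (v - Pi v) (v - Pi v) := by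
          gcongr
          exacts [min_le_left _ _, min_le_right _ _]
      _ ≤ g (Pi v) (Pi v) + T (v - Pi v) (v - Pi v) := by linarith
  · calc g (Pi v) (Pi v) + T (v - Pi v) (v - Pi v)
        ≤ C ^ 2 * g v v + tSup * (2 * g v v + 2 * g (Pi v) (Pi v)) := by
          gcongr
          exacts [hbound v, hT_upper.trans (by gcongr)]
      _ ≤ C ^ 2 * g v v + tSup * (2 * g v v + 2 * (C ^ 2 * g v v)) := by gcongr; exact hbound v
      _ = (C ^ 2 + 2 * tSup * (1 + C ^ 2)) * g v v := by ring

/-- Stability of the projection-based discrete semi-inner product: if `g` is a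
symmetric positive semidefinite bilinear form, `Π` is a linear map with range in
the subspace `K`, fixing `K`, bounded with respect to the seminorm induced by
`g` with constant `C`, and the stabilization `T` is spectrally equivalent to `g`
on the kernel of `Π`, then the discrete form
`g(Πv, Πv) + T(v − Πv, v − Πv)` is spectrally equivalent to `g(v,v)` with
constants depending only on `C`, `t_*` and `t^*`. -/
theorem vem_semi_inner_product_stability
    {V : Type*} [AddCommGroup V] [Module ℝ V]
    (g : V →ₗ[ℝ] V →ₗ[ℝ] ℝ)
    (hg_symm : ∀ x y : V, g x y = g y x)
    (hg_pos : ∀ x : V, 0 ≤ g x x)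
    (K : Submodule ℝ V) (Pi : V →ₗ[ℝ] V)
    (hrange : LinearMap.range Pi ≤ K)
    (hproj : ∀ p ∈ K, Pi p = p)
    (C : ℝ) (hC : 0 < C)
    (hbound : ∀ v : V, g (Pi v) (Pi v) ≤ C ^ 2 * g v v)
    (T : V →ₗ[ℝ] V →ₗ[ℝ] ℝ)
    (tStar tSup : ℝ) (ht0 : 0 < tStar) (htt : tStar ≤ tSup)
    (hT : ∀ w ∈ LinearMap.ker Pi,
      tStar * g w w ≤ T w w ∧ T w w ≤ tSup * g w w) :
    ∃ cStar cSup : ℝ, 0 < cStar ∧ 0 < cSup ∧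
      ∀ v : V,
        cStar * g v v ≤ g (Pi v) (Pi v) + T (v - Pi v) (v - Pi v) ∧
        g (Pi v) (Pi v) + T (v - Pi v) (v - Pi v) ≤ cSup * g v v :=
  vem_semi_inner_product_stability_general g hg_pos K Pi hrange hproj C hbound T tStar tSup ht0 htt
    hT
end
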